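/- Let A be an n×n complex matrix satisfying Re(x*Ax) ≥ 0 for all x ∈ ℂⁿ, and let γ, γ̃ be real numbers with 0 < γ̃ ≤ γ. Then I + γA is invertible and every element μ of the spectrum of the matrix G̃ := I − (I + γA)⁻¹(I + γ̃A) satisfies |μ| < 1; equivalently, the spectral radius of G̃ is strictly less than 1. -/

import Mathlib

open Matrix

private lemma star_dot_self_eq {n : ℕ} (v : Fin n → ℂ) :
    star v ⬝ᵥ v = ((∑ i, Complex.normSq (v i) : ℝ) : ℂ) := by
  push_cast
  simp [dotProduct, Complex.normSq_eq_conj_mul_self, Complex.star_def]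

private lemma star_dot_self_re_pos {n : ℕ} {v : Fin n → ℂ} (hv : v ≠ 0) :
    0 < (star v ⬝ᵥ v).re := by
  rw [star_dot_self_eq, Complex.ofReal_re]
  obtain ⟨i, hi⟩ := Function.ne_iff.mp hv
  exact Finset.sum_pos' (fun j _ => Complex.normSq_nonneg _)
    ⟨i, Finset.mem_univ i, Complex.normSq_pos.mpr hi⟩

private lemma isUnit_one_add_smul {n : ℕ} (A : Matrix (Fin n) (Fin n) ℂ)
    (hA : ∀ x : Fin n → ℂ, 0 ≤ (star x ⬝ᵥ A.mulVec x).re)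
    {c : ℝ} (hc : 0 < c) : IsUnit (1 + (c : ℂ) • A) := by
  rw [Matrix.isUnit_iff_isUnit_det, isUnit_iff_ne_zero]
  intro hdet
  obtain ⟨v, hv, hzero⟩ := Matrix.exists_mulVec_eq_zero_iff.mpr hdet
  have h1 : star v ⬝ᵥ ((1 + (c : ℂ) • A).mulVec v) = 0 := by rw [hzero]; simp
  rw [add_mulVec, one_mulVec, smul_mulVec, dotProduct_add, dotProduct_smul] at h1
  have h2 := congrArg Complex.re h1
  simp [Complex.add_re, Complex.mul_re, smul_eq_mul] at h2
  have hT := star_dot_self_re_pos hv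
  have hs := hA v
  nlinarith [h2]

/-- First assertion of Proposition 2: if `Re (x*Ax) ≥ 0` for all `x` and `0 < γ̃ ≤ γ`,
then `I + γA` is invertible, and the Richardson iteration matrix
`G̃ = I - (I+γA)⁻¹(I+γ̃A)` has all its spectrum strictly inside the unit disk;
equivalently its spectral radius is `< 1`. -/
theorem preconditioned_richardson_converges (n : ℕ)
    (A : Matrix (Fin n) (Fin n) ℂ)
    (hA : ∀ x : Fin n → ℂ, 0 ≤ (star x ⬝ᵥ A.mulVec x).re)
    (γ γt : ℝ) (hγt : 0 < γt) (hγ : γt ≤ γ) :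
    IsUnit (1 + (γ : ℂ) • A) ∧
    (∀ μ ∈ spectrum ℂ (1 - (1 + (γ : ℂ) • A)⁻¹ * (1 + (γt : ℂ) • A)),
      ‖μ‖ < 1) ∧
    spectralRadius ℂ (1 - (1 + (γ : ℂ) • A)⁻¹ * (1 + (γt : ℂ) • A)) < 1 := by
  have hγpos : 0 < γ := lt_of_lt_of_le hγt hγ
  have hB : IsUnit (1 + (γ : ℂ) • A) := isUnit_one_add_smul A hA hγpos
  set B := 1 + (γ : ℂ) • A with hBdef
  set Bt := 1 + (γt : ℂ) • A with hBtdef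
  set M := 1 - B⁻¹ * Bt with hMdef
  have hBdet : IsUnit B.det := (Matrix.isUnit_iff_isUnit_det B).mp hB
  have key : ∀ μ ∈ spectrum ℂ M, ‖μ‖ < 1 := by
    intro μ hμ
    rw [spectrum.mem_iff, Matrix.isUnit_iff_isUnit_det, isUnit_iff_ne_zero, not_not] at hμ
    obtain ⟨v, hv, hzero⟩ := Matrix.exists_mulVec_eq_zero_iff.mpr hμ
    -- (μ • 1 - M) v = 0, i.e. B⁻¹ Bt v = (1 - μ) v
    have h1 : (B⁻¹ * Bt).mulVec v = (1 - μ) • v := by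
      have h : (algebraMap ℂ (Matrix (Fin n) (Fin n) ℂ) μ - M).mulVec v = 0 := hzero
      rw [hMdef, Algebra.algebraMap_eq_smul_one] at h
      have h' : (B⁻¹ * Bt - (1 - μ) • 1) *ᵥ v = 0 := by
        rw [show (B⁻¹ * Bt - (1 - μ) • (1 : Matrix (Fin n) (Fin n) ℂ))
            = μ • 1 - (1 - B⁻¹ * Bt) by module]
        exact h
      rw [sub_mulVec, smul_mulVec, one_mulVec, sub_eq_zero] at h'
      exact h'
    have h2 : Bt.mulVec v = (1 - μ) • B.mulVec v := by
      have h := congrArg (fun w => B.mulVec w) h1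
      simpa [mulVec_mulVec, ← Matrix.mul_assoc, Matrix.mul_nonsing_inv B hBdet,
        Matrix.mulVec_smul] using h
    -- take star v ⬝ᵥ ·
    set s : ℂ := star v ⬝ᵥ A.mulVec v with hsdef
    set t : ℂ := star v ⬝ᵥ v with htdef
    have h3 : t + (γt : ℂ) * s = (1 - μ) * (t + (γ : ℂ) * s) := by
      have h := congrArg (fun w => star v ⬝ᵥ w) h2
      simpa [hBdef, hBtdef, add_mulVec, one_mulVec, smul_mulVec, dotProduct_add,
        dotProduct_smul, smul_eq_mul, mul_add, htdef, hsdef] using h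
    have hT : 0 < t.re := star_dot_self_re_pos hv
    have htim : t.im = 0 := by rw [htdef, star_dot_self_eq, Complex.ofReal_im]
    have hsre : 0 ≤ s.re := hA v
    have h4 : μ * (t + (γ : ℂ) * s) = ((γ : ℂ) - (γt : ℂ)) * s := by linear_combination h3
    have hdenpos : 0 < ‖t + (γ : ℂ) * s‖ := by
      rw [norm_pos_iff]
      intro h
      have h' := congrArg Complex.re h
      simp [Complex.add_re, Complex.mul_re, Complex.ofReal_re, Complex.ofReal_im, htim] at h'
      nlinarith
    have hlt : ‖((γ : ℂ) - (γt : ℂ)) * s‖ < ‖t + (γ : ℂ) * s‖ := by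
      apply lt_of_pow_lt_pow_left₀ 2 (norm_nonneg _)
      rw [Complex.sq_norm, Complex.sq_norm, Complex.normSq_apply, Complex.normSq_apply]
      simp only [Complex.add_re, Complex.add_im, Complex.mul_re, Complex.mul_im,
        Complex.sub_re, Complex.sub_im, Complex.ofReal_re, Complex.ofReal_im, htim]
      ring_nf
      nlinarith [sq_nonneg s.im, sq_nonneg s.re, sq_nonneg t.re,
        mul_nonneg hT.le (mul_nonneg hγpos.le hsre),
        mul_pos hγt (show (0:ℝ) < 2*γ - γt by linarith),
        mul_nonneg hsre hsre]
    have habs : ‖μ‖ * ‖t + (γ : ℂ) * s‖ =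
        ‖((γ : ℂ) - (γt : ℂ)) * s‖ := by
      rw [← norm_mul, h4]
    calc ‖μ‖
        = ‖((γ : ℂ) - (γt : ℂ)) * s‖ / ‖t + (γ : ℂ) * s‖ := by
          field_simp [habs]
          exact habs
      _ < 1 := by rw [div_lt_one hdenpos]; exact hlt
  refine ⟨hB, key, ?_⟩
  have hfin : (spectrum ℂ M).Finite := Matrix.finite_spectrum M
  rcases (spectrum ℂ M).eq_empty_or_nonempty with h | h
  · simp [spectralRadius, h]
  · obtain ⟨μ₀, hμ₀, hmax⟩ := Set.exists_max_image _ (fun μ => ‖μ‖) hfin h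
    have hle : ∀ μ ∈ spectrum ℂ M, ‖μ‖ ≤ ‖μ₀‖ := hmax
    calc spectralRadius ℂ M ≤ (‖μ₀‖₊ : ENNReal) := by
          rw [spectralRadius]
          refine iSup₂_le fun μ hμ => ?_
          have := hle μ hμ
          exact_mod_cast ENNReal.coe_le_coe.mpr (by rw [← NNReal.coe_le_coe, coe_nnnorm, coe_nnnorm]; exact this)
      _ < 1 := by
          rw [← ENNReal.coe_one, ENNReal.coe_lt_coe]
          have := key μ₀ hμ₀
          rw [← NNReal.coe_lt_coe, coe_nnnorm, NNReal.coe_one]; exact this
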